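/- arXiv:1607.08117 — 4 statements merged into one kernel-verified Lean document; each statement's English description precedes it below -/
import Mathlib

section
/- Let Γ₂ = ⟨5, 25ℓ+1⟩ be the numerical semigroup generated by 5 and 25ℓ+1, where ℓ is a positive integer. Then its enumerating function satisfies: Γ₂(k) = 5k for 0 ≤ k ≤ 5ℓ; Γ₂(k) = 25ℓ + 5·⌊(k−5ℓ)/2⌋ + ((k−5ℓ) mod 2) for 5ℓ ≤ k ≤ 15ℓ; Γ₂(k) = 50ℓ + 5·⌊(k−15ℓ)/3⌋ + ((k−15ℓ) mod 3) for 15ℓ ≤ k ≤ 30ℓ; Γ₂(k) = 75ℓ + 5·⌊(k−30ℓ)/4⌋ + ((k−30ℓ) mod 4) for 30ℓ ≤ k ≤ 50ℓ; and Γ₂(k) = 50ℓ + k for k ≥ 50ℓ. -/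
/-!
Since `25ℓ + 1 ≡ 1 [MOD 5]`, a number `x` lies in `⟨5, 25ℓ+1⟩` exactly when
`(25ℓ + 1) * (x % 5) ≤ x`: the residue class `r` mod 5 enters the semigroup at `r * (25ℓ + 1)`.
Hence on the blocks `[25ℓ, 50ℓ)`, `[50ℓ, 75ℓ)`, `[75ℓ, 100ℓ)` each window `5q, …, 5q + 4` contains
the first `2`, `3`, `4` of its elements, and from `100ℓ` on everything, while below `25ℓ` only
multiples of 5 occur. The piecewise formula lists exactly these numbers in increasing order, so
it is `Nat.nth` of the semigroup.
-/

/-- Membership in the numerical semigroup `⟨5, 25ℓ+1⟩`. -/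
def inGamma2 (ℓ : ℕ) (x : ℕ) : Prop := ∃ a b : ℕ, x = 5 * a + (25 * ℓ + 1) * b

theorem StrictMono.exists_eq_of_forall_notMem_Ioo {f : ℕ → ℕ} (hf : StrictMono f) {x : ℕ}
    (h0 : f 0 ≤ x) (hgap : ∀ k, x ∉ Set.Ioo (f k) (f (k + 1))) : ∃ k, f k = x := by
  suffices ∀ n, x < f n → ∃ k, f k = x from
    this (x + 1) ((Nat.lt_succ_self x).trans_le (hf.id_le _))
  intro n hn
  induction n with
  | zero => exact absurd hn h0.not_gt
  | succ n ih =>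
    rcases lt_or_ge x (f n) with hlt | hle
    · exact ih hlt
    · rcases hle.eq_or_lt with heq | hlt
      · exact ⟨n, heq⟩
      · exact absurd ⟨hlt, hn⟩ (hgap n)

theorem Nat.nth_eq_of_strictMono {p : ℕ → Prop} {f : ℕ → ℕ} (hf : StrictMono f)
    (hrange : Set.range f = {x | p x}) : Nat.nth p = f := by
  have hinf : {x | p x}.Infinite := hrange ▸ Set.infinite_range_of_injective hf.injective
  have huniv : {n : ℕ | ∀ hfin : {x | p x}.Finite, n < hfin.toFinset.card} = Set.univ :=
    Set.eq_univ_of_forall fun _ hfin => absurd hfin hinf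
  funext n
  refine (Nat.eq_nth_of_strictMonoOn_of_mapsTo_of_surjOn f ?_ ?_ (hf.strictMonoOn _)
    (huniv ▸ Set.mem_univ n)).symm
  · intro x hx
    obtain ⟨k, rfl⟩ : x ∈ Set.range f := hrange ▸ hx
    exact ⟨k, huniv ▸ Set.mem_univ k, rfl⟩
  · exact fun k _ => hrange ▸ Set.mem_range_self k

theorem Nat.nth_eq_of_strictMono_of_forall_notMem_Ioo {p : ℕ → Prop} {f : ℕ → ℕ}
    (hf : StrictMono f) (hp : ∀ k, p (f k)) (h0 : ∀ x, p x → f 0 ≤ x)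
    (hgap : ∀ k x, p x → x ∉ Set.Ioo (f k) (f (k + 1))) : Nat.nth p = f :=
  Nat.nth_eq_of_strictMono hf <| Set.Subset.antisymm (Set.range_subset_iff.2 hp)
    fun x hx => hf.exists_eq_of_forall_notMem_Ioo (h0 x hx) fun k => hgap k x hx

theorem exists_eq_mul_add_mul_iff_of_modEq_one {m n : ℕ} (h : n ≡ 1 [MOD m]) (x : ℕ) :
    (∃ a b, x = m * a + n * b) ↔ n * (x % m) ≤ x := by
  constructor
  · rintro ⟨a, b, rfl⟩
    have hmod : m * a + n * b ≡ b [MOD m] := calc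
      m * a + n * b ≡ 0 + 1 * b [MOD m] :=
        (Nat.modEq_zero_iff_dvd.2 (dvd_mul_right m a)).add (h.mul_right b)
      _ = b := by ring
    rw [hmod]
    exact (Nat.mul_le_mul_left n (Nat.mod_le b m)).trans (Nat.le_add_left _ _)
  · intro hle
    have hdvd : m ∣ x - n * (x % m) := (Nat.modEq_iff_dvd' hle).1 <| calc
      n * (x % m) ≡ 1 * (x % m) [MOD m] := h.mul_right _
      _ = x % m := one_mul _
      _ ≡ x [MOD m] := Nat.mod_modEq x m
    exact ⟨(x - n * (x % m)) / m, x % m, by rw [Nat.mul_div_cancel' hdvd, Nat.sub_add_cancel hle]⟩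

theorem inGamma2_iff (ℓ x : ℕ) : inGamma2 ℓ x ↔ (25 * ℓ + 1) * (x % 5) ≤ x :=
  exists_eq_mul_add_mul_iff_of_modEq_one (by unfold Nat.ModEq; omega) x

def enumGamma2 (ℓ k : ℕ) : ℕ :=
  if k ≤ 5 * ℓ then 5 * k
  else if k ≤ 15 * ℓ then 25 * ℓ + 5 * ((k - 5 * ℓ) / 2) + (k - 5 * ℓ) % 2
  else if k ≤ 30 * ℓ then 50 * ℓ + 5 * ((k - 15 * ℓ) / 3) + (k - 15 * ℓ) % 3
  else if k ≤ 50 * ℓ then 75 * ℓ + 5 * ((k - 30 * ℓ) / 4) + (k - 30 * ℓ) % 4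
  else 50 * ℓ + k

theorem enumGamma2_strictMono (ℓ : ℕ) : StrictMono (enumGamma2 ℓ) :=
  strictMono_nat_of_lt_succ fun k => by
    simp only [enumGamma2]
    split_ifs <;> omega

-- Fixing the residue mod 5 to a numeral makes the membership criterion linear, hence `omega`.
theorem inGamma2_enumGamma2 (ℓ k : ℕ) : inGamma2 ℓ (enumGamma2 ℓ k) := by
  rw [inGamma2_iff]
  have hr := Nat.mod_lt (enumGamma2 ℓ k) (by norm_num : 0 < 5)
  generalize hmod : enumGamma2 ℓ k % 5 = r at hr ⊢
  simp only [enumGamma2] at hmod ⊢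
  interval_cases r <;> split_ifs at hmod ⊢ <;> omega

theorem not_inGamma2_of_mem_Ioo (ℓ k : ℕ) {x : ℕ}
    (hx : x ∈ Set.Ioo (enumGamma2 ℓ k) (enumGamma2 ℓ (k + 1))) : ¬inGamma2 ℓ x := by
  rw [inGamma2_iff]
  have hr := Nat.mod_lt x (by norm_num : 0 < 5)
  generalize hmod : x % 5 = r at hr ⊢
  simp only [Set.mem_Ioo, enumGamma2] at hx
  interval_cases r <;> split_ifs at hx <;> omega

theorem nth_inGamma2 (ℓ : ℕ) : Nat.nth (inGamma2 ℓ) = enumGamma2 ℓ :=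
  Nat.nth_eq_of_strictMono_of_forall_notMem_Ioo (enumGamma2_strictMono ℓ)
    (inGamma2_enumGamma2 ℓ) (fun x _ => by simp [enumGamma2])
    fun k _ hx hmem => not_inGamma2_of_mem_Ioo ℓ k hmem hx

theorem stmt_6_general (ℓ : ℕ) :
    (∀ k : ℕ, k ≤ 5 * ℓ → Nat.nth (inGamma2 ℓ) k = 5 * k) ∧
    (∀ k : ℕ, 5 * ℓ ≤ k → k ≤ 15 * ℓ →
      Nat.nth (inGamma2 ℓ) k = 25 * ℓ + 5 * ((k - 5 * ℓ) / 2) + (k - 5 * ℓ) % 2) ∧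
    (∀ k : ℕ, 15 * ℓ ≤ k → k ≤ 30 * ℓ →
      Nat.nth (inGamma2 ℓ) k = 50 * ℓ + 5 * ((k - 15 * ℓ) / 3) + (k - 15 * ℓ) % 3) ∧
    (∀ k : ℕ, 30 * ℓ ≤ k → k ≤ 50 * ℓ →
      Nat.nth (inGamma2 ℓ) k = 75 * ℓ + 5 * ((k - 30 * ℓ) / 4) + (k - 30 * ℓ) % 4) ∧
    (∀ k : ℕ, 50 * ℓ ≤ k → Nat.nth (inGamma2 ℓ) k = 50 * ℓ + k) := by
  simp only [nth_inGamma2, enumGamma2]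
  refine ⟨?_, ?_, ?_, ?_, ?_⟩ <;> intros <;> split_ifs <;> omega

/-- The enumerating function (`Nat.nth`) of `⟨5, 25ℓ+1⟩`, computed on five ranges. -/
theorem stmt_6 (ℓ : ℕ) (hℓ : 0 < ℓ) :
    (∀ k : ℕ, k ≤ 5 * ℓ → Nat.nth (inGamma2 ℓ) k = 5 * k) ∧
    (∀ k : ℕ, 5 * ℓ ≤ k → k ≤ 15 * ℓ →
      Nat.nth (inGamma2 ℓ) k = 25 * ℓ + 5 * ((k - 5 * ℓ) / 2) + (k - 5 * ℓ) % 2) ∧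
    (∀ k : ℕ, 15 * ℓ ≤ k → k ≤ 30 * ℓ →
      Nat.nth (inGamma2 ℓ) k = 50 * ℓ + 5 * ((k - 15 * ℓ) / 3) + (k - 15 * ℓ) % 3) ∧
    (∀ k : ℕ, 30 * ℓ ≤ k → k ≤ 50 * ℓ →
      Nat.nth (inGamma2 ℓ) k = 75 * ℓ + 5 * ((k - 30 * ℓ) / 4) + (k - 30 * ℓ) % 4) ∧
    (∀ k : ℕ, 50 * ℓ ≤ k → Nat.nth (inGamma2 ℓ) k = 50 * ℓ + k) :=
  stmt_6_general ℓ
end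

section
/- Let ℓ be a positive integer and let Γ₁, Γ₂ be the enumerating functions of the numerical semigroups ⟨2, 10ℓ+1⟩ and ⟨5, 25ℓ+1⟩ respectively. Define f(k) = Γ₂(k + 13ℓ) − Γ₁(k) for 0 ≤ k ≤ 5ℓ. Then min_{0 ≤ k ≤ 5ℓ} f(k) = 45ℓ − 1, and the minimum is attained at k = 1 and at k = 5ℓ − 1. -/
/-!
Write `S` for the numerical semigroup `⟨m, mq+1⟩`. For `i < m`, the number `mt + i` lies in `S`
iff `qi ≤ t`, so when `qj ≤ t < q(j+1)` the block `mt, …, mt+m-1` meets `S` in exactly its first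
`j+1` elements. Counting block by block, the enumerating function of `S` is piecewise linear,
with slope `m/(j+1)` on the `j`-th window. For `⟨2, 10ℓ+1⟩` only the window `j = 0` is relevant
and `Γ₁(k) = 2k`; for `⟨5, 25ℓ+1⟩` the indices `k + 13ℓ` fall into the windows `j = 1, 2`. This
gives `f(2s+e) = 45ℓ + s - e` for `k = 2s+e ≤ 2ℓ`, `e ≤ 1`, and `f(2ℓ+3s+e) = 46ℓ - s - e` for
`e ≤ 2`, whose minimum `45ℓ - 1` is attained at `k = 1` and `k = 5ℓ - 1`.
-/

/-- Membership in the numerical semigroup `⟨2, 10ℓ+1⟩`. -/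
def inGamma1 (ℓ : ℕ) (x : ℕ) : Prop := ∃ a b : ℕ, x = 2 * a + (10 * ℓ + 1) * b

/-- `f k = Γ₂(k + 13ℓ) − Γ₁(k)`, where `Γᵢ` are the enumerating functions
(`Nat.nth`) of the two semigroups. -/
noncomputable def fdiff (ℓ k : ℕ) : ℤ :=
  (Nat.nth (inGamma2 ℓ) (k + 13 * ℓ) : ℤ) - (Nat.nth (inGamma1 ℓ) k : ℤ)

open Finset Nat

set_option autoImplicit false

def InSemigroup (m q x : ℕ) : Prop := ∃ a b, x = m * a + (m * q + 1) * b

section Membership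

variable {m q i t : ℕ}

theorem inSemigroup_iff (hm : 0 < m) (x : ℕ) : InSemigroup m q x ↔ q * (x % m) ≤ x / m := by
  constructor
  · rintro ⟨a, b, rfl⟩
    rw [show m * a + (m * q + 1) * b = m * (a + q * b) + b by ring, Nat.mul_add_mod,
      Nat.mul_add_div hm]
    calc q * (b % m) ≤ q * b := Nat.mul_le_mul_left _ (Nat.mod_le _ _)
      _ ≤ a + q * b + b / m := (Nat.le_add_left _ _).trans (Nat.le_add_right _ _)
  · intro h
    obtain ⟨d, hd⟩ := Nat.exists_eq_add_of_le h
    refine ⟨d, x % m, ?_⟩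
    nth_rw 1 [← Nat.div_add_mod x m, hd]
    ring

theorem inSemigroup_mul_add_iff (hi : i < m) : InSemigroup m q (m * t + i) ↔ q * i ≤ t := by
  have hm : 0 < m := by omega
  rw [inSemigroup_iff hm, Nat.mul_add_mod, Nat.mod_eq_of_lt hi, Nat.mul_add_div hm,
    Nat.div_eq_of_lt hi, add_zero]

end Membership

section Count

variable {m q e j t u : ℕ} [DecidablePred (InSemigroup m q)]

theorem count_inSemigroup_mul_add (hem : e ≤ m) (hej : e ≤ j + 1) (hjt : q * j ≤ t) :
    count (InSemigroup m q) (m * t + e) = count (InSemigroup m q) (m * t) + e := by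
  rw [Nat.count_add]
  congr 1
  refine Nat.count_of_forall fun i hi => (inSemigroup_mul_add_iff (by omega)).2 ?_
  exact (Nat.mul_le_mul_left q (by omega : i ≤ j)).trans hjt

theorem count_inSemigroup_mul_succ (hj : j < m) (hjt : q * j ≤ t) (htj : t < q * (j + 1)) :
    count (InSemigroup m q) (m * (t + 1)) = count (InSemigroup m q) (m * t) + (j + 1) := by
  rw [show m * (t + 1) = m * t + (j + 1) + (m - (j + 1)) by rw [mul_add]; omega,
    Nat.count_add, count_inSemigroup_mul_add hj le_rfl hjt, add_eq_left]
  refine Nat.count_of_forall_not fun i hi hmem => ?_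
  rw [add_assoc, inSemigroup_mul_add_iff (by omega)] at hmem
  have := Nat.mul_le_mul_left q (by omega : j + 1 ≤ j + 1 + i)
  omega

theorem count_inSemigroup_window (hj : j < m) (hu : u ≤ q) :
    count (InSemigroup m q) (m * (q * j + u)) =
      count (InSemigroup m q) (m * (q * j)) + (j + 1) * u := by
  induction u with
  | zero => simp
  | succ u ih =>
    rw [← add_assoc, count_inSemigroup_mul_succ hj (by omega) (by rw [mul_add]; omega),
      ih (by omega)]
    ring

theorem count_inSemigroup_window_start (hj : j ≤ m) :
    count (InSemigroup m q) (m * (q * j)) = q * ∑ i ∈ range (j + 1), i := by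
  induction j with
  | zero => simp
  | succ j ih =>
    rw [mul_add q j 1, mul_one, count_inSemigroup_window (by omega) le_rfl, ih (by omega),
      sum_range_succ _ (j + 1)]
    ring

end Count

theorem nth_inSemigroup {m q j u e : ℕ} (hj : j < m) (hu : u ≤ q) (he : e ≤ j) :
    nth (InSemigroup m q) (q * ∑ i ∈ range (j + 1), i + (j + 1) * u + e) =
      m * (q * j + u) + e := by
  classical
  have hmem : InSemigroup m q (m * (q * j + u) + e) :=
    (inSemigroup_mul_add_iff (by omega)).2 ((Nat.mul_le_mul_left q he).trans (by omega))
  rw [← count_inSemigroup_window_start hj.le, ← count_inSemigroup_window hj hu,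
    ← count_inSemigroup_mul_add (j := j) (by omega) (by omega) (by omega), nth_count hmem]

section Gamma

variable {ℓ k s e : ℕ}

theorem inGamma1_eq (ℓ : ℕ) : inGamma1 ℓ = InSemigroup 2 (5 * ℓ) := by
  ext x
  simp only [inGamma1, InSemigroup, show 2 * (5 * ℓ) + 1 = 10 * ℓ + 1 by ring]

theorem inGamma2_eq (ℓ : ℕ) : inGamma2 ℓ = InSemigroup 5 (5 * ℓ) := by
  ext x
  simp only [inGamma2, InSemigroup, show 5 * (5 * ℓ) + 1 = 25 * ℓ + 1 by ring]

theorem nth_inGamma1 (hk : k ≤ 5 * ℓ) : nth (inGamma1 ℓ) k = 2 * k := by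
  simpa [inGamma1_eq] using nth_inSemigroup (m := 2) (j := 0) (e := 0) (by norm_num) hk le_rfl

theorem nth_inGamma2_window_one (hs : s ≤ 5 * ℓ) (he : e ≤ 1) :
    nth (inGamma2 ℓ) (5 * ℓ + 2 * s + e) = 25 * ℓ + 5 * s + e := by
  have h := nth_inSemigroup (m := 5) (q := 5 * ℓ) (j := 1) (by norm_num) hs he
  simp only [sum_range_succ, sum_range_zero, ← inGamma2_eq] at h
  convert h using 2 <;> ring

theorem nth_inGamma2_window_two (hs : s ≤ 5 * ℓ) (he : e ≤ 2) :
    nth (inGamma2 ℓ) (15 * ℓ + 3 * s + e) = 50 * ℓ + 5 * s + e := by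
  have h := nth_inSemigroup (m := 5) (q := 5 * ℓ) (j := 2) (by norm_num) hs he
  simp only [sum_range_succ, sum_range_zero, ← inGamma2_eq] at h
  convert h using 2 <;> ring

theorem fdiff_two_mul_add (hk : 2 * s + e ≤ 2 * ℓ) (he : e ≤ 1) :
    fdiff ℓ (2 * s + e) = 45 * ℓ + s - e := by
  have h := nth_inGamma2_window_one (ℓ := ℓ) (s := 4 * ℓ + s) (by omega) he
  rw [show 5 * ℓ + 2 * (4 * ℓ + s) + e = 2 * s + e + 13 * ℓ by ring] at h
  have hk' : 2 * s + e ≤ 5 * ℓ := by omega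
  simp only [fdiff, h, nth_inGamma1 hk']
  push_cast
  ring

theorem fdiff_two_mul_add_three_mul_add (hs : 2 * ℓ + 3 * s + e ≤ 5 * ℓ) (he : e ≤ 2) :
    fdiff ℓ (2 * ℓ + 3 * s + e) = 46 * ℓ - s - e := by
  have h := nth_inGamma2_window_two (ℓ := ℓ) (s := s) (by omega) he
  rw [show 15 * ℓ + 3 * s + e = 2 * ℓ + 3 * s + e + 13 * ℓ by ring] at h
  simp only [fdiff, h, nth_inGamma1 hs]
  push_cast
  ring

end Gamma

/-- `min_{0 ≤ k ≤ 5ℓ} (Γ₂(k+13ℓ) − Γ₁(k)) = 45ℓ − 1`, attained at `k = 1` and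
at `k = 5ℓ − 1`. -/
theorem stmt_7 (ℓ : ℕ) (hℓ : 0 < ℓ) :
    (∀ k : ℕ, k ≤ 5 * ℓ → (45 * ℓ - 1 : ℤ) ≤ fdiff ℓ k) ∧
    fdiff ℓ 1 = 45 * ℓ - 1 ∧ fdiff ℓ (5 * ℓ - 1) = 45 * ℓ - 1 := by
  refine ⟨fun k hk => ?_, ?_, ?_⟩
  · rcases le_or_gt k (2 * ℓ) with hk2 | hk2
    · obtain ⟨s, e, he, rfl⟩ : ∃ s e, e ≤ 1 ∧ k = 2 * s + e :=
        ⟨k / 2, k % 2, by omega, by omega⟩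
      rw [fdiff_two_mul_add hk2 he]
      omega
    · obtain ⟨s, e, hs, he, rfl⟩ : ∃ s e, 2 * ℓ + 3 * s + e ≤ 5 * ℓ ∧ e ≤ 2 ∧
          k = 2 * ℓ + 3 * s + e :=
        ⟨(k - 2 * ℓ) / 3, (k - 2 * ℓ) % 3, by omega, by omega, by omega⟩
      rw [fdiff_two_mul_add_three_mul_add hs he]
      omega
  · simpa using fdiff_two_mul_add (ℓ := ℓ) (s := 0) (e := 1) (by omega) le_rfl
  · obtain ⟨n, rfl⟩ : ∃ n, ℓ = n + 1 := ⟨ℓ - 1, by omega⟩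
    have h := fdiff_two_mul_add_three_mul_add (ℓ := n + 1) (s := n) (e := 2) (by omega) le_rfl
    rw [show 2 * (n + 1) + 3 * n + 2 = 5 * (n + 1) - 1 by omega] at h
    rw [h]
    push_cast
    ring
end

section
/- Let ℓ be a positive integer and 0 < s ≤ 8ℓ. Let Γ₂ be the enumerating function of the numerical semigroup ⟨5, 25ℓ+1⟩. Then Γ₂(13ℓ − s) ≤ 45ℓ − 2s − 1. -/
def gamma2Seq (ℓ i : ℕ) : ℕ :=
  if i ≤ 5 * ℓ then 5 * i else 25 * ℓ + 5 * ((i - 5 * ℓ) / 2) + (i - 5 * ℓ) % 2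

lemma inGamma2_gamma2Seq (ℓ i : ℕ) : inGamma2 ℓ (gamma2Seq ℓ i) := by
  unfold gamma2Seq
  split_ifs with h
  · exact ⟨i, 0, by ring⟩
  · rcases Nat.mod_two_eq_zero_or_one (i - 5 * ℓ) with he | ho
    · exact ⟨5 * ℓ + (i - 5 * ℓ) / 2, 0, by omega⟩
    · exact ⟨(i - 5 * ℓ) / 2, 1, by omega⟩

lemma gamma2Seq_strictMono (ℓ : ℕ) : StrictMono (gamma2Seq ℓ) :=
  strictMono_nat_of_lt_succ fun i => by unfold gamma2Seq; split_ifs <;> omega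

lemma two_mul_gamma2Seq_thirteen_mul_sub {ℓ s : ℕ} (hs : s ≤ 8 * ℓ) :
    2 * gamma2Seq ℓ (13 * ℓ - s) + 5 * s + 3 * (s % 2) = 90 * ℓ := by
  unfold gamma2Seq
  split_ifs <;> omega

theorem stmt_9_general (ℓ s : ℕ) (hs : 0 < s) (hs' : s ≤ 8 * ℓ) :
    (Nat.nth (inGamma2 ℓ) (13 * ℓ - s) : ℤ) ≤ 45 * ℓ - 2 * s - 1 := by
  have hnth : Nat.nth (inGamma2 ℓ) (13 * ℓ - s) ≤ gamma2Seq ℓ (13 * ℓ - s) :=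
    Nat.nth_le_of_strictMonoOn_of_mapsTo _ (fun i _ => inGamma2_gamma2Seq ℓ i)
      ((gamma2Seq_strictMono ℓ).strictMonoOn _)
  have hval := two_mul_gamma2Seq_thirteen_mul_sub hs'
  omega

/-- For `0 < s ≤ 8ℓ`, `Γ₂(13ℓ − s) ≤ 45ℓ − 2s − 1`. -/
theorem stmt_9 (ℓ s : ℕ) (hℓ : 0 < ℓ) (hs : 0 < s) (hs' : s ≤ 8 * ℓ) :
    (Nat.nth (inGamma2 ℓ) (13 * ℓ - s) : ℤ) ≤ 45 * ℓ - 2 * s - 1 :=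
  stmt_9_general ℓ s hs hs'
end

section
/- Consider positive integers n and the short exact sequence of abelian groups 0 → ℤ →α ℤ^h ⊕ ℤ/2ℤ →β G → 0 where G ≅ ℤ^{h−1} ⊕ ℤ/4ℤ. Then α(1) = (c, 1) for some nonzero c ∈ ℤ^h, and c = 2d for a primitive element d ∈ ℤ^h. -/
/-!
The kernel of `β` is generated by `x = α 1 = (c, ε)`. In `ℤ^{h-1} ⊕ ℤ/4` every torsion element is
killed by `4`, and the `2`-torsion `{0, (0, 2)}` consists of doubles; pulling back along the
surjection `β`, any `a` with `2a ∈ ⟨x⟩` is congruent modulo `⟨x⟩` to a double `2w`. For `a = (0, 1)`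
this forces `ε = 1`, and for `a = (c, 0)` it gives `c = 2d`. If `d = m e`, then `4m (e, 0) = 2x`, so
`β (e, 0)` is torsion and `(4e, 0) ∈ ⟨x⟩`; since `ε = 1` this means `4e = 2k c = 4km e`, so `km = 1`.
-/

open AddSubgroup Function

theorem AddMonoidHom.ker_eq_zmultiples_of_exact {G H : Type*} [AddGroup G] [AddGroup H]
    (α : ℤ →+ G) (β : G →+ H) (hexact : ∀ x, β x = 0 ↔ x ∈ Set.range α) :
    β.ker = zmultiples (α 1) := by
  ext x
  rw [β.mem_ker, hexact, ← α.coe_range, SetLike.mem_coe, α.range_eq_map, ← Int.zmultiples_one,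
    α.map_zmultiples]

theorem fst_apply_one_ne_zero_of_injective {M : Type*} [AddCommGroup M] (α : ℤ →+ M × ZMod 2)
    (hinj : Injective α) : (α 1).1 ≠ 0 := by
  intro h0
  have h2 : α (2 • 1) = α 0 := by
    rw [map_nsmul, map_zero]
    exact Prod.ext (by simp [h0]) (CharTwo.two_nsmul _)
  exact two_ne_zero (by simpa using hinj h2)

section TorsionOfTarget

variable {κ : Type*}

theorem exists_two_nsmul_eq_of_two_nsmul_eq_zero {y : (κ → ℤ) × ZMod 4} (hy : 2 • y = 0) :
    ∃ z, 2 • z = y := by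
  have hy₁ : y.1 = 0 := (smul_eq_zero.mp (congrArg Prod.fst hy)).resolve_left two_ne_zero
  have hZ4 : ∀ t : ZMod 4, 2 • t = 0 → ∃ u, 2 • u = t := by decide
  obtain ⟨u, hu⟩ := hZ4 y.2 (congrArg Prod.snd hy)
  exact ⟨(0, u), Prod.ext (by simp [hy₁]) hu⟩

theorem four_nsmul_eq_zero_of_zsmul_eq_zero {y : (κ → ℤ) × ZMod 4} {n : ℤ} (hn : n ≠ 0)
    (hy : n • y = 0) : 4 • y = 0 := by
  have hy₁ : y.1 = 0 := (smul_eq_zero.mp (congrArg Prod.fst hy)).resolve_left hn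
  have hZ4 : ∀ t : ZMod 4, 4 • t = 0 := by decide
  exact Prod.ext (by simp [hy₁]) (hZ4 _)

end TorsionOfTarget

theorem exists_two_mul_zsmul_eq_of_zsmul_eq {M : Type*} [AddCommGroup M] {x : M × ZMod 2}
    (hx : x.2 = 1) {n : ℤ} {a : M} (h : n • x = (a, 0)) : ∃ k : ℤ, (2 * k) • x.1 = a := by
  have hn : Even n := by
    rw [← ZMod.intCast_eq_zero_iff_even]
    simpa [hx] using congrArg Prod.snd h
  obtain ⟨k, rfl⟩ := hn
  exact ⟨k, by simpa [two_mul] using congrArg Prod.fst h⟩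

section Kernel

variable {ι κ : Type*} {β : (ι → ℤ) × ZMod 2 →+ (κ → ℤ) × ZMod 4} {x : (ι → ℤ) × ZMod 2}

theorem exists_sub_two_nsmul_mem_ker (hsurj : Surjective β) {a : (ι → ℤ) × ZMod 2}
    (ha : 2 • a ∈ β.ker) : ∃ w, a - 2 • w ∈ β.ker := by
  obtain ⟨z, hz⟩ := exists_two_nsmul_eq_of_two_nsmul_eq_zero (y := β a) (by rwa [← map_nsmul])
  obtain ⟨w, rfl⟩ := hsurj z
  exact ⟨w, by rw [AddMonoidHom.mem_ker, map_sub, map_nsmul, hz, sub_self]⟩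

theorem snd_eq_one_of_ker_eq_zmultiples (hsurj : Surjective β) (hker : β.ker = zmultiples x) :
    x.2 = 1 := by
  obtain ⟨w, hw⟩ := exists_sub_two_nsmul_mem_ker hsurj
    (a := ((0 : ι → ℤ), (1 : ZMod 2))) (by simp [CharTwo.two_eq_zero, Prod.mk_zero_zero])
  rw [hker] at hw
  obtain ⟨n, hn⟩ := mem_zmultiples_iff.mp hw
  have hnx : n • x.2 = 1 := by simpa [CharTwo.two_eq_zero] using congrArg Prod.snd hn
  rcases (show ∀ ε : ZMod 2, ε = 0 ∨ ε = 1 by decide) x.2 with h0 | h1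
  · simp [h0] at hnx
  · exact h1

theorem exists_fst_eq_two_nsmul_of_ker_eq_zmultiples (hsurj : Surjective β)
    (hker : β.ker = zmultiples x) (hx : x.2 = 1) : ∃ d, x.1 = 2 • d := by
  obtain ⟨w, hw⟩ := exists_sub_two_nsmul_mem_ker hsurj (a := (x.1, 0)) (by
    rw [hker]
    convert nsmul_mem (mem_zmultiples x) 2 using 1
    exact Prod.ext rfl (by simp [CharTwo.two_eq_zero]))
  rw [hker] at hw
  obtain ⟨n, hn⟩ := mem_zmultiples_iff.mp hw
  obtain ⟨k, hk⟩ := exists_two_mul_zsmul_eq_of_zsmul_eq hx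
    (a := x.1 - 2 • w.1) (hn.trans (Prod.ext rfl (by simp [CharTwo.two_eq_zero])))
  exact ⟨w.1 + k • x.1, by linear_combination (norm := module) -hk⟩

theorem isUnit_of_ker_eq_zmultiples (hker : β.ker = zmultiples x) (hx : x.2 = 1)
    (hx₀ : x.1 ≠ 0) {d e : ι → ℤ} {m : ℤ} (hd : x.1 = 2 • d) (hde : d = m • e) : IsUnit m := by
  subst hde
  have hm : m ≠ 0 := by rintro rfl; simp [hd] at hx₀
  have he : e ≠ 0 := by rintro rfl; simp [hd] at hx₀
  have h4m : (4 * m) • ((e, 0) : (ι → ℤ) × ZMod 2) = (2 : ℤ) • x := by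
    refine Prod.ext ?_ (by simp [hx, CharTwo.two_eq_zero])
    simp only [Prod.smul_fst, hd]
    module
  have h4 : 4 • ((e, 0) : (ι → ℤ) × ZMod 2) ∈ β.ker := by
    rw [AddMonoidHom.mem_ker, map_nsmul]
    refine four_nsmul_eq_zero_of_zsmul_eq_zero (mul_ne_zero four_ne_zero hm) ?_
    rw [← map_zsmul, h4m, ← AddMonoidHom.mem_ker, hker]
    exact zsmul_mem (mem_zmultiples x) 2
  rw [hker] at h4
  obtain ⟨n, hn⟩ := mem_zmultiples_iff.mp h4
  obtain ⟨k, hk⟩ := exists_two_mul_zsmul_eq_of_zsmul_eq hx (a := 4 • e)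
    (hn.trans (Prod.ext rfl (by simp)))
  rw [hd] at hk
  have hkm : (4 * (k * m)) • e = (4 : ℤ) • e := by linear_combination (norm := module) hk
  exact .of_mul_eq_one k (by linarith [smul_left_injective ℤ he hkm])

end Kernel

theorem stmt_12_general (h : ℕ)
    (α : ℤ →+ (Fin h → ℤ) × ZMod 2)
    (β : (Fin h → ℤ) × ZMod 2 →+ (Fin (h - 1) → ℤ) × ZMod 4)
    (hinj : Function.Injective α)
    (hsurj : Function.Surjective β)
    (hexact : ∀ x : (Fin h → ℤ) × ZMod 2, β x = 0 ↔ x ∈ Set.range α) :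
    (α 1).1 ≠ 0 ∧ (α 1).2 = 1 ∧
      ∃ d : Fin h → ℤ, (α 1).1 = 2 • d ∧
        ∀ (m : ℤ) (e : Fin h → ℤ), d = m • e → IsUnit m := by
  have hker := α.ker_eq_zmultiples_of_exact β hexact
  have hc := fst_apply_one_ne_zero_of_injective α hinj
  have hε := snd_eq_one_of_ker_eq_zmultiples hsurj hker
  obtain ⟨d, hd⟩ := exists_fst_eq_two_nsmul_of_ker_eq_zmultiples hsurj hker hε
  exact ⟨hc, hε, d, hd, fun m e hde => isUnit_of_ker_eq_zmultiples hker hε hc hd hde⟩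

/-- Given a short exact sequence `0 → ℤ →α ℤ^h ⊕ ℤ/2 →β ℤ^{h−1} ⊕ ℤ/4 → 0`,
one has `α(1) = (c, 1)` with `c ≠ 0`, and `c = 2d` for a primitive `d ∈ ℤ^h`
(primitive meaning: `d` is not a non-unit multiple of another element). -/
theorem stmt_12 (h : ℕ) (hh : 1 ≤ h)
    (α : ℤ →+ (Fin h → ℤ) × ZMod 2)
    (β : (Fin h → ℤ) × ZMod 2 →+ (Fin (h - 1) → ℤ) × ZMod 4)
    (hinj : Function.Injective α)
    (hsurj : Function.Surjective β)
    (hexact : ∀ x : (Fin h → ℤ) × ZMod 2, β x = 0 ↔ x ∈ Set.range α) :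
    (α 1).1 ≠ 0 ∧ (α 1).2 = 1 ∧
      ∃ d : Fin h → ℤ, (α 1).1 = 2 • d ∧
        ∀ (m : ℤ) (e : Fin h → ℤ), d = m • e → IsUnit m :=
  stmt_12_general h α β hinj hsurj hexact
end
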